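/- For every formula φ of the language L∀∃, MS4.t ⊢ φ^{t#} ↔ ◇_P φ^{t#}, where ◇_P abbreviates ¬□_P¬. -/
import Mathlib


/-- Formulas of the monadic intuitionistic language `L∀∃`. -/
inductive MForm : Type
  | var : Nat → MForm
  | bot : MForm
  | and : MForm → MForm → MForm
  | or  : MForm → MForm → MForm
  | imp : MForm → MForm → MForm
  | all : MForm → MForm
  | ex  : MForm → MForm

/-- Intuitionistic negation `¬φ := φ → ⊥`. -/
def MForm.neg (φ : MForm) : MForm := φ.imp MForm.bot

/-- Biconditional `φ ↔ ψ := (φ → ψ) ∧ (ψ → φ)`. -/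
def MForm.iff (φ ψ : MForm) : MForm := (φ.imp ψ).and (ψ.imp φ)

/-- Formulas of the language `L_T∀` with modalities `□_F`, `□_P`, `∀`. -/
inductive AForm : Type
  | var : Nat → AForm
  | bot : AForm
  | and : AForm → AForm → AForm
  | or  : AForm → AForm → AForm
  | imp : AForm → AForm → AForm
  | boxF : AForm → AForm
  | boxP : AForm → AForm
  | fa   : AForm → AForm

def AForm.neg (φ : AForm) : AForm := φ.imp AForm.bot
def AForm.iff (φ ψ : AForm) : AForm := (φ.imp ψ).and (ψ.imp φ)
/-- `◇_F φ := ¬□_F¬φ`. -/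
def AForm.diaF (φ : AForm) : AForm := ((φ.neg).boxF).neg
/-- `◇_P φ := ¬□_P¬φ`. -/
def AForm.diaP (φ : AForm) : AForm := ((φ.neg).boxP).neg
/-- `∃φ := ¬∀¬φ`. -/
def AForm.exq (φ : AForm) : AForm := ((φ.neg).fa).neg

/-- The tense `MS4` logic `MS4.t`: classical logic with S4-axioms for `□_F` and
`□_P`, the tense axioms `p → □_P◇_F p` and `p → □_F◇_P p`, the S5-axioms for
`∀`, and the left commutativity axiom `□_F∀p → ∀□_F p`, closed under modus
ponens and the three necessitation rules (axioms are given as schemes, hence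
closure under uniform substitution is automatic). -/
inductive MS4t : AForm → Prop
  -- classical propositional axioms
  | a1 (φ ψ : AForm) : MS4t (φ.imp (ψ.imp φ))
  | a2 (φ ψ χ : AForm) : MS4t ((φ.imp (ψ.imp χ)).imp ((φ.imp ψ).imp (φ.imp χ)))
  | a3 (φ ψ : AForm) : MS4t ((φ.and ψ).imp φ)
  | a4 (φ ψ : AForm) : MS4t ((φ.and ψ).imp ψ)
  | a5 (φ ψ : AForm) : MS4t (φ.imp (ψ.imp (φ.and ψ)))
  | a6 (φ ψ : AForm) : MS4t (φ.imp (φ.or ψ))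
  | a7 (φ ψ : AForm) : MS4t (ψ.imp (φ.or ψ))
  | a8 (φ ψ χ : AForm) : MS4t ((φ.imp χ).imp ((ψ.imp χ).imp ((φ.or ψ).imp χ)))
  | a9 (φ : AForm) : MS4t (AForm.bot.imp φ)
  | dne (φ : AForm) : MS4t ((φ.neg.neg).imp φ)
  -- S4-axioms for □_F
  | bFK (φ ψ : AForm) : MS4t (((φ.imp ψ).boxF).imp ((φ.boxF).imp ψ.boxF))
  | bFT (φ : AForm) : MS4t ((φ.boxF).imp φ)
  | bF4 (φ : AForm) : MS4t ((φ.boxF).imp φ.boxF.boxF)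
  -- S4-axioms for □_P
  | bPK (φ ψ : AForm) : MS4t (((φ.imp ψ).boxP).imp ((φ.boxP).imp ψ.boxP))
  | bPT (φ : AForm) : MS4t ((φ.boxP).imp φ)
  | bP4 (φ : AForm) : MS4t ((φ.boxP).imp φ.boxP.boxP)
  -- tense axioms
  | tense1 (φ : AForm) : MS4t (φ.imp ((φ.diaF).boxP))
  | tense2 (φ : AForm) : MS4t (φ.imp ((φ.diaP).boxF))
  -- S5-axioms for ∀
  | faK (φ ψ : AForm) : MS4t (((φ.imp ψ).fa).imp ((φ.fa).imp ψ.fa))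
  | faT (φ : AForm) : MS4t ((φ.fa).imp φ)
  | fa4 (φ : AForm) : MS4t ((φ.fa).imp φ.fa.fa)
  | faB (φ : AForm) : MS4t (φ.imp (φ.exq.fa))
  -- left commutativity axiom
  | comm (φ : AForm) : MS4t ((φ.fa.boxF).imp (φ.boxF.fa))
  -- rules
  | mp (φ ψ : AForm) : MS4t (φ.imp ψ) → MS4t φ → MS4t ψ
  | necF (φ : AForm) : MS4t φ → MS4t φ.boxF
  | necP (φ : AForm) : MS4t φ → MS4t φ.boxP
  | necFa (φ : AForm) : MS4t φ → MS4t φ.fa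

/-- The translation `(−)^{t#} : L∀∃ → L_T∀` (the Gödel translation followed by
`(−)^#`), with `(∃φ)^{t#} = ∃φ^{t#}`. -/
def tsharp : MForm → AForm
  | .var n => (AForm.var n).boxF
  | .bot => AForm.bot
  | .and φ ψ => (tsharp φ).and (tsharp ψ)
  | .or φ ψ => (tsharp φ).or (tsharp ψ)
  | .imp φ ψ => (((tsharp φ).neg).or (tsharp ψ)).boxF
  | .all φ => ((tsharp φ).fa).boxF
  | .ex φ => (tsharp φ).exq

namespace MS4tAux

open AForm MS4t

lemma mp' {φ ψ : AForm} (h1 : MS4t (φ.imp ψ)) (h2 : MS4t φ) : MS4t ψ :=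
  MS4t.mp _ _ h1 h2

lemma imp_id (φ : AForm) : MS4t (φ.imp φ) :=
  mp' (mp' (a2 φ (φ.imp φ) φ) (a1 φ (φ.imp φ))) (a1 φ φ)

lemma imp_trans {φ ψ χ : AForm} (h1 : MS4t (φ.imp ψ)) (h2 : MS4t (ψ.imp χ)) :
    MS4t (φ.imp χ) :=
  mp' (mp' (a2 φ ψ χ) (mp' (a1 (ψ.imp χ) φ) h2)) h1

lemma mp1 {φ ψ χ : AForm} (h1 : MS4t (φ.imp (ψ.imp χ))) (h2 : MS4t (φ.imp ψ)) :
    MS4t (φ.imp χ) :=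
  mp' (mp' (a2 φ ψ χ) h1) h2

lemma swap {φ ψ χ : AForm} (h : MS4t (φ.imp (ψ.imp χ))) : MS4t (ψ.imp (φ.imp χ)) :=
  imp_trans (a1 ψ φ) (mp' (a2 φ ψ χ) h)

lemma dni (φ : AForm) : MS4t (φ.imp φ.neg.neg) :=
  swap (imp_id φ.neg)

lemma contra {φ ψ : AForm} (h : MS4t (φ.imp ψ)) : MS4t ((ψ.neg).imp (φ.neg)) :=
  swap (imp_trans h (swap (imp_id ψ.neg)))

lemma contra' {φ ψ : AForm} (h : MS4t ((ψ.neg).imp (φ.neg))) : MS4t (φ.imp ψ) :=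
  imp_trans (dni φ) (imp_trans (contra h) (dne ψ))

lemma and_thm {φ ψ : AForm} (h1 : MS4t φ) (h2 : MS4t ψ) : MS4t (φ.and ψ) :=
  mp' (mp' (a5 φ ψ) h1) h2

lemma and_imp {γ α β : AForm} (h1 : MS4t (γ.imp α)) (h2 : MS4t (γ.imp β)) :
    MS4t (γ.imp (α.and β)) :=
  mp1 (imp_trans h1 (a5 α β)) h2

lemma monoF {φ ψ : AForm} (h : MS4t (φ.imp ψ)) : MS4t ((φ.boxF).imp (ψ.boxF)) :=
  mp' (bFK φ ψ) (necF _ h)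

lemma monoP {φ ψ : AForm} (h : MS4t (φ.imp ψ)) : MS4t ((φ.boxP).imp (ψ.boxP)) :=
  mp' (bPK φ ψ) (necP _ h)

lemma monoFa {φ ψ : AForm} (h : MS4t (φ.imp ψ)) : MS4t ((φ.fa).imp (ψ.fa)) :=
  mp' (faK φ ψ) (necFa _ h)

lemma monoDP {φ ψ : AForm} (h : MS4t (φ.imp ψ)) : MS4t ((φ.diaP).imp (ψ.diaP)) :=
  contra (monoP (contra h))

lemma monoEx {φ ψ : AForm} (h : MS4t (φ.imp ψ)) : MS4t ((φ.exq).imp (ψ.exq)) :=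
  contra (monoFa (contra h))

/-- `φ → ◇_P φ`, from reflexivity of `□_P`. -/
lemma to_diaP (φ : AForm) : MS4t (φ.imp φ.diaP) :=
  swap (bPT φ.neg)

/-- `◇_P □_F φ → φ`, from the tense axiom `tense1` and transitivity facts. -/
lemma diaP_boxF (φ : AForm) : MS4t (((φ.boxF).diaP).imp φ) :=
  contra' (imp_trans
    (imp_trans (tense1 φ.neg) (monoP (contra (monoF (dni φ)))))
    (dni ((φ.boxF).neg.boxP)))

/-- `◇_P □_F φ → □_F φ`. -/
lemma diaP_boxF_boxF (φ : AForm) : MS4t (((φ.boxF).diaP).imp (φ.boxF)) :=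
  imp_trans (monoDP (bF4 φ)) (diaP_boxF (φ.boxF))

/-- S5-fact: `∃∀φ → φ`. -/
lemma exq_fa (φ : AForm) : MS4t (((φ.fa).exq).imp φ) := by
  have h1 : MS4t (((φ.fa).exq).imp (φ.fa)) :=
    contra' (imp_trans
      (imp_trans (faB (φ.fa).neg)
        (monoFa (contra (imp_trans (fa4 φ) (monoFa (dni φ.fa))))))
      (dni ((φ.fa).neg.fa)))
  exact imp_trans h1 (faT φ)

/-- The key lemma: `◇_P ∃ p → ∃ ◇_P p`, from the commutativity axiom via
adjunctions. -/
lemma diaP_exq (p : AForm) : MS4t (((p.exq).diaP).imp ((p.diaP).exq)) := by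
  -- p → □_F ◇_P p → □_F ∀ ∃ ◇_P p
  have c : MS4t (p.imp ((p.diaP.exq.fa).boxF)) :=
    imp_trans (tense2 p) (monoF (faB p.diaP))
  -- p → ∀ □_F ∃ ◇_P p
  have d : MS4t (p.imp ((p.diaP.exq.boxF).fa)) :=
    imp_trans c (comm p.diaP.exq)
  -- ∃ p → □_F ∃ ◇_P p
  have e : MS4t ((p.exq).imp (p.diaP.exq.boxF)) :=
    imp_trans (monoEx d) (exq_fa (p.diaP.exq.boxF))
  exact imp_trans (monoDP e) (diaP_boxF p.diaP.exq)

/-- `◇_P ⊥ → ⊥`. -/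
lemma diaP_bot : MS4t ((AForm.bot.diaP).imp AForm.bot) :=
  mp' (dni (AForm.bot.neg.boxP)) (necP _ (imp_id AForm.bot))

/-- From `◇_P α → α` and `◇_P β → β` infer `◇_P (α ∨ β) → α ∨ β`. -/
lemma diaP_or {α β : AForm} (iha : MS4t ((α.diaP).imp α))
    (ihb : MS4t ((β.diaP).imp β)) : MS4t (((α.or β).diaP).imp (α.or β)) := by
  have ha' : MS4t ((α.neg).imp ((α.neg).boxP)) :=
    imp_trans (contra iha) (dne ((α.neg).boxP))
  have hb' : MS4t ((β.neg).imp ((β.neg).boxP)) :=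
    imp_trans (contra ihb) (dne ((β.neg).boxP))
  have key : MS4t (((α.neg).boxP).imp (((β.neg).boxP).imp (((α.or β).neg).boxP))) :=
    imp_trans (mp' (bPK _ _) (necP _ (a8 α β AForm.bot))) (bPK _ _)
  have g : MS4t (((α.or β).neg).imp (((α.or β).neg).boxP)) :=
    mp1 (imp_trans (imp_trans (contra (a6 α β)) ha') key)
      (imp_trans (contra (a7 α β)) hb')
  exact contra' (imp_trans g (dni (((α.or β).neg).boxP)))

end MS4tAux

open MS4tAux in
/-- For every `L∀∃`-formula `φ`,
`MS4.t ⊢ φ^{t#} ↔ ◇_P φ^{t#}`. -/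
theorem tsharp_diaP_equiv (φ : MForm) :
    MS4t ((tsharp φ).iff ((tsharp φ).diaP)) := by
  have key : ∀ ψ : MForm, MS4t (((tsharp ψ).diaP).imp (tsharp ψ)) := by
    intro ψ
    induction ψ with
    | var n => exact diaP_boxF_boxF _
    | bot => exact diaP_bot
    | and φ ψ ihφ ihψ =>
        exact and_imp (imp_trans (monoDP (MS4t.a3 _ _)) ihφ)
          (imp_trans (monoDP (MS4t.a4 _ _)) ihψ)
    | or φ ψ ihφ ihψ => exact diaP_or ihφ ihψ
    | imp φ ψ ihφ ihψ => exact diaP_boxF_boxF _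
    | all φ ih => exact diaP_boxF_boxF _
    | ex φ ih => exact imp_trans (diaP_exq _) (monoEx ih)
  exact and_thm (to_diaP _) (key φ)
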